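/- arXiv:2411.17222 — 5 statements merged into one kernel-verified Lean document; each statement's English description precedes it below -/
import Mathlib

section
/- For every 1 ≤ i ≤ n, Z^i is contained in the Δ-Springer fiber Y_{n,(1^{n−1}),s}: if a flag V_• of type (1^n, s−1) satisfies V_{i−1} ⊆ im(x), im(x) ⊆ V_n and x V_n ⊆ V_{i−1}, then x V_j ⊆ V_j for all 0 ≤ j ≤ n (and im(x) ⊆ V_n), so V_• ∈ Y_{n,(1^{n−1}),s}. -/
noncomputable section

/-- `x` is the nilpotent linear map on `ℂ^(n-1+s)` with `x e_i = e_{i-(n-1)}` for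
`n ≤ i ≤ 2n-2` (1-indexed) and `x e_i = 0` otherwise. Indices of `Fin (n-1+s)` are
0-indexed, so `e_i` (math, 1-indexed) corresponds to `Pi.single ⟨i-1,_⟩ 1`. -/
def IsDeltaMap (n s : ℕ)
    (x : (Fin (n - 1 + s) → ℂ) →ₗ[ℂ] (Fin (n - 1 + s) → ℂ)) : Prop :=
  ∀ i : Fin (n - 1 + s), x (Pi.single i 1) =
    if n ≤ (i : ℕ) + 1 ∧ (i : ℕ) + 1 ≤ 2 * n - 2 then
      Pi.single
        (⟨(i : ℕ) - (n - 1), Nat.lt_of_le_of_lt (Nat.sub_le _ _) i.isLt⟩ : Fin (n - 1 + s))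
        (1 : ℂ)
    else 0

/-- A flag of type `(1^n, s-1)` in `ℂ^(n-1+s)`:
`0 = V 0 ⊆ V 1 ⊆ ⋯ ⊆ V n` with `dim (V j) = j` for `0 ≤ j ≤ n`. -/
def IsFlag (n s : ℕ) (V : ℕ → Submodule ℂ (Fin (n - 1 + s) → ℂ)) : Prop :=
  V 0 = ⊥ ∧ (∀ j < n, V j ≤ V (j + 1)) ∧ ∀ j ≤ n, Module.finrank ℂ (V j) = j

/-- Membership in `Z^{i,j}`: a flag of type `(1^n,s-1)` with `V_{j-1} ⊆ im x`,
`im x ⊆ V_n` and `x V_n ⊆ V_{i-1}`. -/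
def MemZij (n s i j : ℕ)
    (x : (Fin (n - 1 + s) → ℂ) →ₗ[ℂ] (Fin (n - 1 + s) → ℂ))
    (V : ℕ → Submodule ℂ (Fin (n - 1 + s) → ℂ)) : Prop :=
  IsFlag n s V ∧ V (j - 1) ≤ LinearMap.range x ∧ LinearMap.range x ≤ V n ∧
    Submodule.map x (V n) ≤ V (i - 1)

/-- Membership in `Z^i = Z^{i,i}`. -/
def MemZ (n s i : ℕ)
    (x : (Fin (n - 1 + s) → ℂ) →ₗ[ℂ] (Fin (n - 1 + s) → ℂ))
    (V : ℕ → Submodule ℂ (Fin (n - 1 + s) → ℂ)) : Prop :=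
  MemZij n s i i x V

/-- Membership in the Δ-Springer fiber `Y_{n,(1^{n-1}),s}`. -/
def MemY (n s : ℕ)
    (x : (Fin (n - 1 + s) → ℂ) →ₗ[ℂ] (Fin (n - 1 + s) → ℂ))
    (V : ℕ → Submodule ℂ (Fin (n - 1 + s) → ℂ)) : Prop :=
  IsFlag n s V ∧ LinearMap.range x ≤ V n ∧ ∀ j ≤ n, Submodule.map x (V j) ≤ V j

/-! Since `x² = 0`, `x` kills `im x ⊇ V_{i-1}` and hence every `V_j` with `j ≤ i - 1`; for
`j ≥ i - 1` the chain `x V_j ⊆ x V_n ⊆ V_{i-1} ⊆ V_j` does the job. -/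

namespace Submodule

variable {R M : Type*} [Semiring R] [AddCommMonoid M] [Module R M] {f : M →ₗ[R] M}

theorem map_eq_bot_of_le_range_of_range_le_ker (hf : LinearMap.range f ≤ LinearMap.ker f)
    {U : Submodule R M} (hU : U ≤ LinearMap.range f) : U.map f = ⊥ :=
  LinearMap.le_ker_iff_map.mp (hU.trans hf)

theorem map_le_self_of_square_zero (hf : LinearMap.range f ≤ LinearMap.ker f)
    {K N U : Submodule R M} (hK : K ≤ LinearMap.range f) (hN : N.map f ≤ K)
    (hU : U ≤ K ∨ K ≤ U ∧ U ≤ N) : U.map f ≤ U := by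
  rcases hU with hUK | ⟨hKU, hUN⟩
  · simp [map_eq_bot_of_le_range_of_range_le_ker hf (hUK.trans hK)]
  · exact (map_mono hUN).trans (hN.trans hKU)

end Submodule

theorem IsDeltaMap.range_le_ker {n s : ℕ} {x : (Fin (n - 1 + s) → ℂ) →ₗ[ℂ] (Fin (n - 1 + s) → ℂ)}
    (hx : IsDeltaMap n s x) : LinearMap.range x ≤ LinearMap.ker x := by
  rw [LinearMap.range_le_ker_iff]
  refine (Pi.basisFun ℂ _).ext fun k ↦ ?_
  rw [Pi.basisFun_apply, LinearMap.comp_apply, hx k]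
  split_ifs with hk
  · -- `x e_k` is a basis vector of index `< n - 1`, where `x` vanishes
    rw [hx, if_neg (by dsimp only; omega), LinearMap.zero_apply]
  · rw [map_zero, LinearMap.zero_apply]

theorem IsFlag.mono {n s : ℕ} {V : ℕ → Submodule ℂ (Fin (n - 1 + s) → ℂ)} (hV : IsFlag n s V)
    {a b : ℕ} (hab : a ≤ b) (hbn : b ≤ n) : V a ≤ V b := by
  induction b, hab using Nat.le_induction with
  | base => exact le_rfl
  | succ b _ ih => exact (ih (by omega)).trans (hV.2.1 b (by omega))

theorem stmt_1_general (n s : ℕ)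
    (x : (Fin (n - 1 + s) → ℂ) →ₗ[ℂ] (Fin (n - 1 + s) → ℂ)) (hx : IsDeltaMap n s x)
    (i : ℕ) (hin : i ≤ n)
    (V : ℕ → Submodule ℂ (Fin (n - 1 + s) → ℂ)) (hV : IsFlag n s V)
    (h1 : V (i - 1) ≤ LinearMap.range x)
    (h2 : LinearMap.range x ≤ V n)
    (h3 : Submodule.map x (V n) ≤ V (i - 1)) :
    (∀ j ≤ n, Submodule.map x (V j) ≤ V j) ∧ MemY n s x V := by
  have hstable : ∀ j ≤ n, Submodule.map x (V j) ≤ V j := fun j hj ↦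
    Submodule.map_le_self_of_square_zero hx.range_le_ker h1 h3 <|
      (le_total j (i - 1)).imp (fun h ↦ hV.mono h (by omega))
        (fun h ↦ ⟨hV.mono h hj, hV.mono hj le_rfl⟩)
  exact ⟨hstable, hV, h2, hstable⟩

/-- For `1 ≤ i ≤ n`, `Z^i ⊆ Y_{n,(1^{n-1}),s}`: if a flag `V` of type
`(1^n, s-1)` satisfies `V_{i-1} ⊆ im x`, `im x ⊆ V_n` and `x V_n ⊆ V_{i-1}`, then
`x V_j ⊆ V_j` for all `0 ≤ j ≤ n`, so `V ∈ Y_{n,(1^{n-1}),s}`. -/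
theorem stmt_1 (n s : ℕ) (hn : 2 ≤ n) (hs : n - 1 ≤ s)
    (x : (Fin (n - 1 + s) → ℂ) →ₗ[ℂ] (Fin (n - 1 + s) → ℂ)) (hx : IsDeltaMap n s x)
    (i : ℕ) (hi1 : 1 ≤ i) (hin : i ≤ n)
    (V : ℕ → Submodule ℂ (Fin (n - 1 + s) → ℂ)) (hV : IsFlag n s V)
    (h1 : V (i - 1) ≤ LinearMap.range x)
    (h2 : LinearMap.range x ≤ V n)
    (h3 : Submodule.map x (V n) ≤ V (i - 1)) :
    (∀ j ≤ n, Submodule.map x (V j) ≤ V j) ∧ MemY n s x V :=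
  stmt_1_general n s x hx i hin V hV h1 h2 h3
end
end

section
/- Assume s = n−1. For all 2 ≤ i ≤ j ≤ n and 2 ≤ k ≤ ℓ ≤ n, the containment Z^{k,ℓ} ⊆ Z^{i,j} holds if and only if k ≤ i and j ≤ ℓ. (Consequently, the poset of intersections of irreducible components of Y_{n,n−1} under reverse inclusion is isomorphic to the type A_{n−1} root poset.) -/
/-!
For `s = n - 1` the map `x` sends `e_{n-1+q}` to `e_q` and kills `e_0, …, e_{n-2}` (0-indexed), so
`im x` is the coordinate subspace on the first `n - 1` coordinates. The condition defining `Z^{i,j}`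
weakens as `i` grows and `j` shrinks, which gives `⇐`. For `⇒`, the coordinate flag through
`e_0, …, e_{l-2}, e_{n+k-3}, e_{l-1}, …, e_{n-2}` lies in `Z^{k,l}`. Its `V_n` contains `e_{n+k-3}`,
whose image `e_{k-2}` enters the flag only at `V_{k-1}`, forcing `k ≤ i`; and `e_{n+k-3} ∉ im x`
enters at `V_l`, forcing `j ≤ l`.
-/

noncomputable section

open Submodule Module

section CoordSpan

variable {K : Type*} [DivisionRing K] {N : ℕ}

variable (K N) in
def coordSpan (S : Set ℕ) : Submodule K (Fin N → K) :=
  span K (Pi.basisFun K (Fin N) '' {p | (p : ℕ) ∈ S})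

theorem single_mem_coordSpan_iff {S : Set ℕ} {p : Fin N} :
    Pi.single p (1 : K) ∈ coordSpan K N S ↔ (p : ℕ) ∈ S := by
  rw [coordSpan, ← Pi.basisFun_apply, Basis.self_mem_span_image]
  rfl

theorem coordSpan_le_iff {S : Set ℕ} {W : Submodule K (Fin N → K)} :
    coordSpan K N S ≤ W ↔ ∀ p : Fin N, (p : ℕ) ∈ S → Pi.single p 1 ∈ W := by
  simp [coordSpan, span_le, Set.subset_def]

theorem coordSpan_mono {S T : Set ℕ} (h : S ⊆ T) : coordSpan K N S ≤ coordSpan K N T :=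
  coordSpan_le_iff.2 fun _ hp => single_mem_coordSpan_iff.2 (h hp)

theorem map_coordSpan_le {M : Type*} [AddCommGroup M] [Module K M] (f : (Fin N → K) →ₗ[K] M)
    {S : Set ℕ} {W : Submodule K M} (h : ∀ p : Fin N, (p : ℕ) ∈ S → f (Pi.single p 1) ∈ W) :
    map f (coordSpan K N S) ≤ W :=
  map_le_iff_le_comap.2 (coordSpan_le_iff.2 h)

theorem coordSpan_univ : coordSpan K N Set.univ = ⊤ := by
  simp only [coordSpan, Set.mem_univ, Set.ofPred_true, Set.image_univ, Basis.span_eq]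

theorem coordSpan_empty : coordSpan K N ∅ = ⊥ := by
  simp [coordSpan]

theorem Module.Basis.finrank_span_image {ι M : Type*} [AddCommGroup M] [Module K M]
    (b : Basis ι K M) (s : Finset ι) : finrank K (span K (b '' s)) = s.card := by
  classical
  rw [← Finset.coe_image, finrank_span_finset_eq_card, Finset.card_image_of_injective _ b.injective]
  rw [Finset.coe_image]
  exact (b.linearIndependent.linearIndepOn _).id_image

theorem finrank_coordSpan {S : Finset ℕ} (hS : ∀ a ∈ S, a < N) :
    finrank K (coordSpan K N S) = S.card := by
  have hT : {p : Fin N | (p : ℕ) ∈ (S : Set ℕ)} = ↑(Finset.univ.filter fun p : Fin N => ↑p ∈ S) :=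
    by ext; simp
  rw [coordSpan, hT, Basis.finrank_span_image]
  refine Finset.card_nbij Fin.val (fun _ hp => by simpa using hp) (fun _ _ _ _ => Fin.ext)
    fun a ha => ⟨⟨a, hS a ha⟩, by simpa using ha, rfl⟩

end CoordSpan

theorem IsFlag.le_of_le {n s : ℕ} {V : ℕ → Submodule ℂ (Fin (n - 1 + s) → ℂ)} (hV : IsFlag n s V)
    {a b : ℕ} (hab : a ≤ b) (hb : b ≤ n) : V a ≤ V b := by
  induction b, hab using Nat.le_induction with
  | base => exact le_rfl
  | succ b _ ih => exact (ih (by omega)).trans (hV.2.1 b (by omega))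

namespace IsDeltaMap

variable {n : ℕ} {x : (Fin (n - 1 + (n - 1)) → ℂ) →ₗ[ℂ] (Fin (n - 1 + (n - 1)) → ℂ)}

theorem apply_single_of_lt (hx : IsDeltaMap n (n - 1) x) {p : Fin (n - 1 + (n - 1))}
    (hp : (p : ℕ) < n - 1) : x (Pi.single p 1) = 0 := by
  rw [hx, if_neg (by omega)]

theorem apply_single_of_le (hx : IsDeltaMap n (n - 1) x) {p : Fin (n - 1 + (n - 1))}
    (hp : n - 1 ≤ (p : ℕ)) : x (Pi.single p 1) = Pi.single ⟨p - (n - 1), by omega⟩ 1 := by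
  rw [hx, if_pos (by omega)]

theorem range_eq (hx : IsDeltaMap n (n - 1) x) :
    LinearMap.range x = coordSpan ℂ _ (Set.Iio (n - 1)) := by
  refine le_antisymm ?_ (coordSpan_le_iff.2 fun q hq => ?_)
  · rw [LinearMap.range_eq_map, ← coordSpan_univ]
    refine map_coordSpan_le x fun p _ => ?_
    rcases lt_or_ge (p : ℕ) (n - 1) with hp | hp
    · rw [hx.apply_single_of_lt hp]
      exact zero_mem _
    · rw [hx.apply_single_of_le hp, single_mem_coordSpan_iff]
      simp only [Set.mem_Iio]
      omega
  · refine ⟨Pi.single ⟨q + (n - 1), by simp at hq; omega⟩ 1, ?_⟩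
    rw [hx.apply_single_of_le (by simp)]
    congr 2
    simp

end IsDeltaMap

def witnessIndex (n k l t : ℕ) : ℕ :=
  if t < l - 1 then t else if t = l - 1 then n + k - 3 else t - 1

def witnessFlag (n k l m : ℕ) : Submodule ℂ (Fin (n - 1 + (n - 1)) → ℂ) :=
  coordSpan ℂ _ ((Finset.range m).image (witnessIndex n k l) : Set ℕ)

theorem single_mem_witnessFlag_iff {n k l m : ℕ} {p : Fin (n - 1 + (n - 1))} :
    Pi.single p (1 : ℂ) ∈ witnessFlag n k l m ↔ ∃ t < m, witnessIndex n k l t = p := by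
  simp [witnessFlag, single_mem_coordSpan_iff]

section Witness

variable {n k l : ℕ} (hk : 2 ≤ k) (hkl : k ≤ l) (hl : l ≤ n)
include hk hkl hl

theorem witnessFlag_isFlag : IsFlag n (n - 1) (witnessFlag n k l) := by
  refine ⟨by simp [witnessFlag, coordSpan_empty], fun m _ => ?_, fun m hm => ?_⟩
  · refine coordSpan_mono (Finset.coe_subset.2 (Finset.image_subset_image ?_))
    exact Finset.range_subset_range.2 (Nat.le_succ m)
  · rw [witnessFlag, finrank_coordSpan, Finset.card_image_of_injOn, Finset.card_range]
    · intro t ht t' ht' h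
      simp only [Finset.coe_range, Set.mem_Iio] at ht ht'
      unfold witnessIndex at h
      split_ifs at h <;> omega
    · simp only [Finset.mem_image, Finset.mem_range, forall_exists_index, and_imp]
      rintro _ t ht rfl
      unfold witnessIndex
      split_ifs <;> omega

theorem memZij_witnessFlag {x : (Fin (n - 1 + (n - 1)) → ℂ) →ₗ[ℂ] (Fin (n - 1 + (n - 1)) → ℂ)}
    (hx : IsDeltaMap n (n - 1) x) : MemZij n (n - 1) k l x (witnessFlag n k l) := by
  refine ⟨witnessFlag_isFlag hk hkl hl, ?_, ?_, ?_⟩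
  · rw [hx.range_eq, witnessFlag]
    refine coordSpan_mono fun p hp => ?_
    obtain ⟨t, ht, rfl⟩ : ∃ t < l - 1, witnessIndex n k l t = p := by simpa using hp
    rw [Set.mem_Iio, witnessIndex, if_pos ht]
    omega
  · rw [hx.range_eq, coordSpan_le_iff]
    intro q hq
    rw [Set.mem_Iio] at hq
    refine single_mem_witnessFlag_iff.2 ⟨if q < l - 1 then q else q + 1, by split_ifs <;> omega, ?_⟩
    unfold witnessIndex
    split_ifs <;> omega
  · refine map_coordSpan_le x fun p hp => ?_
    rcases lt_or_ge (p : ℕ) (n - 1) with hpn | hpn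
    · rw [hx.apply_single_of_lt hpn]
      exact zero_mem _
    · obtain ⟨t, ht, hpt⟩ : ∃ t < n, witnessIndex n k l t = p := by simpa using hp
      rw [hx.apply_single_of_le hpn, single_mem_witnessFlag_iff]
      refine ⟨k - 2, by omega, ?_⟩
      rw [Fin.val_mk]
      unfold witnessIndex at hpt ⊢
      split_ifs at hpt ⊢ <;> omega

theorem le_and_le_of_memZij_witnessFlag
    {x : (Fin (n - 1 + (n - 1)) → ℂ) →ₗ[ℂ] (Fin (n - 1 + (n - 1)) → ℂ)}
    (hx : IsDeltaMap n (n - 1) x) {i j : ℕ} (h : MemZij n (n - 1) i j x (witnessFlag n k l)) :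
    k ≤ i ∧ j ≤ l := by
  obtain ⟨-, hVj, -, hxV⟩ := h
  let e : Fin (n - 1 + (n - 1)) := ⟨n + k - 3, by omega⟩
  have he : ∀ m, l ≤ m → Pi.single e (1 : ℂ) ∈ witnessFlag n k l m := fun m hm =>
    single_mem_witnessFlag_iff.2 ⟨l - 1, by omega, by simp [witnessIndex, e]⟩
  constructor
  · have hxe := hxV (mem_map_of_mem (he n hl))
    rw [hx.apply_single_of_le (by simp [e]; omega), single_mem_witnessFlag_iff] at hxe
    obtain ⟨t, ht, hte⟩ := hxe
    simp only [witnessIndex, e] at hte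
    split_ifs at hte <;> omega
  · by_contra! hlj
    have hre := hVj (he (j - 1) (by omega))
    rw [hx.range_eq, single_mem_coordSpan_iff, Set.mem_Iio, Fin.val_mk] at hre
    omega

end Witness

theorem stmt_6_general (n : ℕ)
    (x : (Fin (n - 1 + (n - 1)) → ℂ) →ₗ[ℂ] (Fin (n - 1 + (n - 1)) → ℂ))
    (hx : IsDeltaMap n (n - 1) x)
    (i j k l : ℕ) (hij : i ≤ j)
    (hk : 2 ≤ k) (hkl : k ≤ l) (hl : l ≤ n) :
    (∀ V : ℕ → Submodule ℂ (Fin (n - 1 + (n - 1)) → ℂ),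
        MemZij n (n - 1) k l x V → MemZij n (n - 1) i j x V) ↔ (k ≤ i ∧ j ≤ l) := by
  constructor
  · exact fun H =>
      le_and_le_of_memZij_witnessFlag hk hkl hl hx (H _ (memZij_witnessFlag hk hkl hl hx))
  · rintro ⟨hki, hjl⟩ V ⟨hV, hVl, hrange, hxV⟩
    exact ⟨hV, (hV.le_of_le (by omega) (by omega)).trans hVl, hrange,
      hxV.trans (hV.le_of_le (by omega) (by omega))⟩

/-- For `s = n-1` and `2 ≤ i ≤ j ≤ n`, `2 ≤ k ≤ ℓ ≤ n`:
`Z^{k,ℓ} ⊆ Z^{i,j}` if and only if `k ≤ i` and `j ≤ ℓ`. -/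
theorem stmt_6 (n : ℕ) (hn : 2 ≤ n)
    (x : (Fin (n - 1 + (n - 1)) → ℂ) →ₗ[ℂ] (Fin (n - 1 + (n - 1)) → ℂ))
    (hx : IsDeltaMap n (n - 1) x)
    (i j k l : ℕ) (hi : 2 ≤ i) (hij : i ≤ j) (hj : j ≤ n)
    (hk : 2 ≤ k) (hkl : k ≤ l) (hl : l ≤ n) :
    (∀ V : ℕ → Submodule ℂ (Fin (n - 1 + (n - 1)) → ℂ),
        MemZij n (n - 1) k l x V → MemZij n (n - 1) i j x V) ↔ (k ≤ i ∧ j ≤ l) :=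
  stmt_6_general n x hx i j k l hij hk hkl hl
end
end

section
/- Let w : {1,…,n} → {1,…,n−1+s} be injective with {1,…,n−1} ⊆ {w_1,…,w_n}, and let V_j = span(e_{w_1},…,e_{w_j}) for 0 ≤ j ≤ n, a flag of type (1^n, s−1). Let b be the unique index with w_b ≥ n (unique because w is injective and n−1 of its n values lie in {1,…,n−1}). Fix i with 1 ≤ i ≤ n. Then V_• ∈ Z^i if and only if one of the following holds: (1) n ≤ w_b ≤ 2n−2 and, letting a be the index with w_a = w_b − (n−1), one has a < i ≤ b; or (2) w_b ≥ 2n−1 and i ≤ b. -/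
/-!
Since `w` is injective and covers `{1, …, n-1}`, the value `w_b` is the only one that is `≥ n`,
so `x` kills `e_{w_t}` for every `t ≠ b`. Hence `im x = span(e_1, …, e_{n-1}) ⊆ V_n` always,
`V_{i-1} ⊆ im x` holds iff position `b` is not among the first `i - 1`, and `x V_n ⊆ V_{i-1}`
reduces to `x e_{w_b} ∈ V_{i-1}`, where `x e_{w_b}` is `e_{w_a}` if `w_b ≤ 2n-2` and `0` otherwise.
-/

noncomputable section

namespace Pi

variable {R ι : Type*} [Semiring R] [Finite ι] [DecidableEq ι]

theorem single_one_mem_spanSubset_iff [Nontrivial R] {s : Set ι} {p : ι} :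
    Pi.single p (1 : R) ∈ spanSubset R s ↔ p ∈ s := by
  rw [mem_spanSubset_iff]
  refine ⟨fun h => by_contra fun hp => by simpa using h p hp, fun hp q hq => ?_⟩
  exact Pi.single_eq_of_ne (ne_of_mem_of_not_mem hp hq).symm _

theorem spanSubset_le_spanSubset_iff [Nontrivial R] {s t : Set ι} :
    spanSubset R s ≤ spanSubset R t ↔ s ⊆ t := by
  refine ⟨fun h p hp => single_one_mem_spanSubset_iff.1 (h (single_one_mem_spanSubset_iff.2 hp)),
    fun h => Submodule.span_mono (Set.image_mono h)⟩

theorem spanSubset_eq_span_image (s : Set ι) :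
    spanSubset R s = Submodule.span R ((fun p => Pi.single p (1 : R)) '' s) := by
  simp only [spanSubset, basisFun_apply]

theorem map_spanSubset_le_iff {M : Type*} [AddCommMonoid M] [Module R M] (f : (ι → R) →ₗ[R] M)
    {s : Set ι} {N : Submodule R M} :
    (spanSubset R s).map f ≤ N ↔ ∀ p ∈ s, f (Pi.single p 1) ∈ N := by
  rw [spanSubset_eq_span_image, Submodule.map_span, Submodule.span_le, ← Set.image_comp,
    Set.image_subset_iff]
  rfl

end Pi

theorem Function.Injective.apply_mem_of_ne {α β : Type*} [Fintype α] [DecidableEq β]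
    {w : α → β} (hw : Function.Injective w) {S : Finset β} (hS : ↑S ⊆ Set.range w)
    (hcard : Fintype.card α ≤ S.card + 1) {b : α} (hb : w b ∉ S) {t : α} (ht : t ≠ b) :
    w t ∈ S := by
  classical
  have hsub : S ⊆ (Finset.univ.erase b).image w := by
    intro p hp
    obtain ⟨u, rfl⟩ := hS hp
    exact Finset.mem_image_of_mem w
      (Finset.mem_erase.2 ⟨by rintro rfl; exact hb hp, Finset.mem_univ u⟩)
  have hcard' : ((Finset.univ.erase b).image w).card ≤ S.card := by
    rw [Finset.card_image_of_injective _ hw, Finset.card_erase_of_mem (Finset.mem_univ b),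
      Finset.card_univ]
    omega
  rw [Finset.eq_of_subset_of_card_le hsub hcard']
  exact Finset.mem_image_of_mem w (Finset.mem_erase.2 ⟨ht, Finset.mem_univ t⟩)

def permFlag (K : Type*) [Field K] {ι : Type*} [Finite ι] {n : ℕ} (w : Fin n → ι) (j : ℕ) :
    Submodule K (ι → K) :=
  Pi.spanSubset K (w '' {t | (t : ℕ) < j})

theorem permFlag_eq_span {K ι : Type*} [Field K] [Finite ι] [DecidableEq ι] {n : ℕ}
    (w : Fin n → ι) (j : ℕ) :
    permFlag K w j = Submodule.span K {v | ∃ t : Fin n, (t : ℕ) < j ∧ v = Pi.single (w t) 1} := by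
  rw [permFlag, Pi.spanSubset_eq_span_image]
  congr 1
  ext v
  simp [eq_comm]

theorem isFlag_permFlag {n s : ℕ} {w : Fin n → Fin (n - 1 + s)} (hw : Function.Injective w) :
    IsFlag n s (permFlag ℂ w) := by
  refine ⟨?_, fun j _ => ?_, fun j hj => ?_⟩
  · simp [permFlag, Pi.spanSubset_eq_span_image]
  · exact Pi.spanSubset_le_spanSubset_iff.2 (Set.image_mono fun t ht => Nat.lt_succ_of_lt ht)
  · rw [permFlag, Pi.dim_spanSubset, Set.ncard_image_of_injective _ hw]
    simp [Set.ncard_eq_toFinset_card', Fin.card_filter_val_lt, hj]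

theorem IsDeltaMap.range_eq_s8 {n s : ℕ} (hs : n - 1 ≤ s)
    {x : (Fin (n - 1 + s) → ℂ) →ₗ[ℂ] (Fin (n - 1 + s) → ℂ)} (hx : IsDeltaMap n s x) :
    LinearMap.range x = Pi.spanSubset ℂ {p : Fin (n - 1 + s) | (p : ℕ) < n - 1} := by
  apply le_antisymm
  · have htop : (⊤ : Submodule ℂ (Fin (n - 1 + s) → ℂ)) = Pi.spanSubset ℂ Set.univ :=
      (eq_top_iff.2 fun _ _ => Pi.mem_spanSubset_iff.2 fun _ h => absurd trivial h).symm
    rw [LinearMap.range_eq_map, htop, Pi.map_spanSubset_le_iff]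
    intro p _
    rw [hx]
    split_ifs with hp
    · exact Pi.single_one_mem_spanSubset_iff.2 (by simp; omega)
    · exact zero_mem _
  · rw [Pi.spanSubset_eq_span_image, Submodule.span_le]
    rintro _ ⟨p, hp, rfl⟩
    refine ⟨Pi.single ⟨p + (n - 1), by grind⟩ 1, ?_⟩
    rw [hx, if_pos (by grind)]
    congr 1
    ext; simp

section PermutationFlag

variable {n s : ℕ} {x : (Fin (n - 1 + s) → ℂ) →ₗ[ℂ] (Fin (n - 1 + s) → ℂ)}
  {w : Fin n → Fin (n - 1 + s)} {b : Fin n}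

theorem lt_of_ne_of_cover (hw : Function.Injective w)
    (hcover : ∀ p : Fin (n - 1 + s), (p : ℕ) < n - 1 → ∃ t : Fin n, w t = p)
    (hb : n - 1 ≤ (w b : ℕ)) {t : Fin n} (ht : t ≠ b) : (w t : ℕ) < n - 1 := by
  classical
  have hS := hw.apply_mem_of_ne (S := {p | (p : ℕ) < n - 1})
    (fun p hp => hcover p (by simpa using hp))
    (by simp [Fin.card_filter_val_lt]; omega) (by simpa using hb) ht
  simpa using hS

theorem range_le_permFlag (hs : n - 1 ≤ s) (hx : IsDeltaMap n s x)
    (hcover : ∀ p : Fin (n - 1 + s), (p : ℕ) < n - 1 → ∃ t : Fin n, w t = p) :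
    LinearMap.range x ≤ permFlag ℂ w n := by
  rw [hx.range_eq_s8 hs, permFlag, Pi.spanSubset_le_spanSubset_iff]
  intro p hp
  obtain ⟨t, rfl⟩ := hcover p hp
  exact ⟨t, t.isLt, rfl⟩

theorem permFlag_le_range_iff (hs : n - 1 ≤ s) (hx : IsDeltaMap n s x)
    (hb : n - 1 ≤ (w b : ℕ)) (hsmall : ∀ t ≠ b, (w t : ℕ) < n - 1) (j : ℕ) :
    permFlag ℂ w j ≤ LinearMap.range x ↔ j ≤ b := by
  rw [hx.range_eq_s8 hs, permFlag, Pi.spanSubset_le_spanSubset_iff]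
  constructor
  · intro h
    by_contra! hbj
    have : (w b : ℕ) < n - 1 := h ⟨b, hbj, rfl⟩
    omega
  · rintro h _ ⟨t, ht, rfl⟩
    exact hsmall t (by rintro rfl; exact absurd ht (by simpa using h))

theorem map_permFlag_le_iff (hx : IsDeltaMap n s x) (hsmall : ∀ t ≠ b, (w t : ℕ) < n - 1)
    (j : ℕ) :
    (permFlag ℂ w n).map x ≤ permFlag ℂ w j ↔ x (Pi.single (w b) 1) ∈ permFlag ℂ w j := by
  rw [permFlag, Pi.map_spanSubset_le_iff]
  refine ⟨fun h => h _ ⟨b, b.isLt, rfl⟩, ?_⟩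
  rintro h _ ⟨t, -, rfl⟩
  obtain rfl | htb := eq_or_ne t b
  · exact h
  · rw [hx, if_neg (by have := hsmall t htb; omega)]
    exact zero_mem _

theorem memZ_permFlag_iff (hs : n - 1 ≤ s) (hx : IsDeltaMap n s x) (hw : Function.Injective w)
    (hcover : ∀ p : Fin (n - 1 + s), (p : ℕ) < n - 1 → ∃ t : Fin n, w t = p)
    (hb : n - 1 ≤ (w b : ℕ)) (i : ℕ) :
    MemZ n s i x (permFlag ℂ w) ↔
      i ≤ (b : ℕ) + 1 ∧ x (Pi.single (w b) 1) ∈ permFlag ℂ w (i - 1) := by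
  have hsmall : ∀ t ≠ b, (w t : ℕ) < n - 1 := fun t => lt_of_ne_of_cover hw hcover hb
  rw [MemZ, MemZij, permFlag_le_range_iff hs hx hb hsmall, map_permFlag_le_iff hx hsmall]
  have hrange := range_le_permFlag hs hx hcover
  have hflag := isFlag_permFlag hw
  constructor
  · rintro ⟨-, hib, -, hmap⟩; exact ⟨by omega, hmap⟩
  · rintro ⟨hib, hmap⟩; exact ⟨hflag, by omega, hrange, hmap⟩

end PermutationFlag

-- Positions and values are `0`-indexed: the paper's `w_{t+1}` is `w t + 1`.
theorem stmt_8_general (n s : ℕ) (hs : n - 1 ≤ s)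
    (x : (Fin (n - 1 + s) → ℂ) →ₗ[ℂ] (Fin (n - 1 + s) → ℂ)) (hx : IsDeltaMap n s x)
    (w : Fin n → Fin (n - 1 + s)) (hw : Function.Injective w)
    (hcover : ∀ p : Fin (n - 1 + s), (p : ℕ) < n - 1 → ∃ t : Fin n, w t = p)
    (b : Fin n) (hb : n - 1 ≤ (w b : ℕ))
    (i : ℕ)
    (V : ℕ → Submodule ℂ (Fin (n - 1 + s) → ℂ))
    (hVdef : ∀ jj : ℕ, V jj =
      Submodule.span ℂ {v | ∃ t : Fin n, (t : ℕ) < jj ∧ v = Pi.single (w t) (1 : ℂ)}) :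
    MemZ n s i x V ↔
      (((w b : ℕ) + 1 ≤ 2 * n - 2 ∧
          ∀ a : Fin n, (w a : ℕ) = (w b : ℕ) - (n - 1) →
            ((a : ℕ) + 1 < i ∧ i ≤ (b : ℕ) + 1)) ∨
        (2 * n - 1 ≤ (w b : ℕ) + 1 ∧ i ≤ (b : ℕ) + 1)) := by
  obtain rfl : V = permFlag ℂ w := funext fun j => (hVdef j).trans (permFlag_eq_span w j).symm
  rw [memZ_permFlag_iff hs hx hw hcover hb, hx]
  split_ifs with hxb
  · obtain ⟨a, ha⟩ := hcover ⟨_, Nat.lt_of_le_of_lt (Nat.sub_le _ _) (w b).isLt⟩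
      (show (w b : ℕ) - (n - 1) < n - 1 by omega)
    rw [permFlag, Pi.single_one_mem_spanSubset_iff, ← ha, hw.mem_set_image]
    constructor
    · rintro ⟨hib, hai⟩
      refine .inl ⟨hxb.2, fun a' ha' => ?_⟩
      obtain rfl : a' = a := hw (Fin.ext (by rw [ha', ha]))
      exact ⟨by simp at hai; omega, hib⟩
    · rintro (⟨-, h⟩ | ⟨h, -⟩)
      · obtain ⟨hai, hib⟩ := h a (by rw [ha])
        exact ⟨hib, by simp; omega⟩
      · omega
  · simp only [zero_mem, and_true]
    constructor
    · intro hib; exact .inr ⟨by omega, hib⟩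
    · rintro (⟨h, -⟩ | ⟨-, hib⟩)
      · omega
      · exact hib

/-- characterization of permutation flags in `Z^i`. Here `w` is an
injective map `{1,…,n} → {1,…,n-1+s}` (both sides 0-indexed in Lean, so the math
value of `w_t` is `(w t : ℕ) + 1` and the math position is `(t : ℕ) + 1`), whose
image contains `{1,…,n-1}`, with `V_j = span(e_{w_1},…,e_{w_j})`, and `b` is the
index with `w_b ≥ n`. Then `V ∈ Z^i` iff either
(1) `n ≤ w_b ≤ 2n-2` and the index `a` with `w_a = w_b - (n-1)` satisfies
`a < i ≤ b`, or (2) `w_b ≥ 2n-1` and `i ≤ b`. -/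
theorem stmt_8 (n s : ℕ) (hn : 2 ≤ n) (hs : n - 1 ≤ s)
    (x : (Fin (n - 1 + s) → ℂ) →ₗ[ℂ] (Fin (n - 1 + s) → ℂ)) (hx : IsDeltaMap n s x)
    (w : Fin n → Fin (n - 1 + s)) (hw : Function.Injective w)
    (hcover : ∀ p : Fin (n - 1 + s), (p : ℕ) < n - 1 → ∃ t : Fin n, w t = p)
    (b : Fin n) (hb : n - 1 ≤ (w b : ℕ))
    (i : ℕ) (hi1 : 1 ≤ i) (hin : i ≤ n)
    (V : ℕ → Submodule ℂ (Fin (n - 1 + s) → ℂ))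
    (hVdef : ∀ jj : ℕ, V jj =
      Submodule.span ℂ {v | ∃ t : Fin n, (t : ℕ) < jj ∧ v = Pi.single (w t) (1 : ℂ)}) :
    MemZ n s i x V ↔
      (((w b : ℕ) + 1 ≤ 2 * n - 2 ∧
          ∀ a : Fin n, (w a : ℕ) = (w b : ℕ) - (n - 1) →
            ((a : ℕ) + 1 < i ∧ i ≤ (b : ℕ) + 1)) ∨
        (2 * n - 1 ≤ (w b : ℕ) + 1 ∧ i ≤ (b : ℕ) + 1)) :=
  stmt_8_general n s hs x hx w hw hcover b hb i V hVdef
end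
end

section
/- For integers n ≥ 2 and 2 ≤ i ≤ n, the number of surjective functions f : {1,…,n} → {1,…,n−1} whose restriction to {1,…,i−1} is injective and whose restriction to {i,…,n} is injective equals (i−1)(n−i+1)(n−1)!. (Equivalently, the number of ordered set partitions of {1,…,n} into n−1 blocks in which 1,…,i−1 lie in distinct blocks and i,…,n lie in distinct blocks is (i−1)(n−i+1)(n−1)!.) -/
/-!
A surjection `f : α → β` with `|α| = |β| + 1` identifies exactly one pair of points. If `f` is
injective on `s` and on `sᶜ`, that pair is some `a ∈ s`, `b ∉ s`, and `f` is a bijection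
`{x // x ≠ b} ≃ β` extended by `f b = f a`. Conversely every such triple `(a, b, e)` gives such an
`f`, so there are `|s| · |sᶜ| · |β|!` of them; for `s = {1, …, i - 1}` in `{1, …, n}` this is
`(i - 1)(n - i + 1)(n - 1)!`.
-/

open Function Set
open scoped Nat

section ExtendNe

variable {α β : Type*} [DecidableEq α] {b : α}

def extendNe (e : {x // x ≠ b} ≃ β) (a : {x // x ≠ b}) : α → β :=
  fun x => if h : x = b then e a else e ⟨x, h⟩

variable (e : {x // x ≠ b} ≃ β) (a : {x // x ≠ b})

@[simp]
theorem extendNe_self : extendNe e a b = e a := dif_pos rfl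

theorem extendNe_of_ne {x : α} (hx : x ≠ b) : extendNe e a x = e ⟨x, hx⟩ := dif_neg hx

theorem extendNe_self_eq_extendNe_coe : extendNe e a b = extendNe e a a := by
  rw [extendNe_self, extendNe_of_ne e a a.2]

theorem surjective_extendNe : Surjective (extendNe e a) := fun y =>
  ⟨e.symm y, by rw [extendNe_of_ne e a (e.symm y).2, Subtype.coe_eta, e.apply_symm_apply]⟩

theorem eq_or_eq_of_extendNe_eq {x y : α} (hxy : x ≠ y) (h : extendNe e a x = extendNe e a y) :
    x = a ∧ y = b ∨ x = b ∧ y = a := by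
  by_cases hx : x = b <;> by_cases hy : y = b
  · exact absurd (hx.trans hy.symm) hxy
  · rw [hx, extendNe_self, extendNe_of_ne e a hy] at h
    exact .inr ⟨hx, congrArg Subtype.val (e.injective h).symm⟩
  · rw [hy, extendNe_self, extendNe_of_ne e a hx] at h
    exact .inl ⟨congrArg Subtype.val (e.injective h), hy⟩
  · rw [extendNe_of_ne e a hx, extendNe_of_ne e a hy] at h
    exact absurd (congrArg Subtype.val (e.injective h)) hxy

theorem injOn_extendNe {s : Set α} (hs : ¬((a : α) ∈ s ∧ b ∈ s)) : InjOn (extendNe e a) s := by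
  intro x hx y hy h
  by_contra hxy
  rcases eq_or_eq_of_extendNe_eq e a hxy h with ⟨rfl, rfl⟩ | ⟨rfl, rfl⟩
  exacts [hs ⟨hx, hy⟩, hs ⟨hy, hx⟩]

end ExtendNe

section Counting

variable {α : Type*} (β : Type*) [DecidableEq α] (s : Set α)

/-- `⟨b, a, e⟩` encodes the map `extendNe e a`, whose only collision is the pair `a ∈ s`, `b ∉ s`. -/
abbrev CrossCollision := Σ b : ↥sᶜ, ↥s × ({x // x ≠ (b : α)} ≃ β)

variable {β s}

namespace CrossCollision

def toFun (c : CrossCollision β s) : α → β :=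
  extendNe c.2.2 ⟨c.2.1, ne_of_mem_of_not_mem c.2.1.2 c.1.2⟩

theorem surjective_toFun (c : CrossCollision β s) : Surjective c.toFun :=
  surjective_extendNe _ _

theorem injOn_toFun (c : CrossCollision β s) : InjOn c.toFun s :=
  injOn_extendNe _ _ fun h => c.1.2 h.2

theorem injOn_compl_toFun (c : CrossCollision β s) : InjOn c.toFun sᶜ :=
  injOn_extendNe _ _ fun h => h.1 c.2.1.2

theorem toFun_injective : Injective (toFun : CrossCollision β s → α → β) := by
  rintro ⟨⟨b, hb⟩, ⟨a, ha⟩, e⟩ ⟨⟨b', hb'⟩, ⟨a', ha'⟩, e'⟩ h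
  have hab : a ≠ b := ne_of_mem_of_not_mem ha hb
  have hab' : a' ≠ b' := ne_of_mem_of_not_mem ha' hb'
  change extendNe e ⟨a, hab⟩ = extendNe e' ⟨a', hab'⟩ at h
  obtain rfl : b = b' := by
    have hcoll := extendNe_self_eq_extendNe_coe e ⟨a, hab⟩
    rw [h] at hcoll
    rcases eq_or_eq_of_extendNe_eq e' _ hab.symm hcoll with ⟨-, rfl⟩ | ⟨rfl, -⟩
    exacts [absurd ha hb', rfl]
  obtain rfl : e = e' := Equiv.ext fun x => by
    have hx := congrFun h x
    rwa [extendNe_of_ne _ _ x.2, extendNe_of_ne _ _ x.2] at hx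
  obtain rfl : a = a' := by
    simpa using congrFun h b
  rfl

theorem exists_toFun_eq [Fintype α] [Fintype β]
    (hcard : Fintype.card α = Fintype.card β + 1) {f : α → β} (hf : Surjective f)
    (hs : InjOn f s) (hsc : InjOn f sᶜ) : ∃ c : CrossCollision β s, c.toFun = f := by
  obtain ⟨x, y, hxy, hfxy⟩ := Fintype.exists_ne_map_eq_of_card_lt f (by omega)
  obtain ⟨a, b, ha, hb, hab, hfab⟩ :
      ∃ a b, a ∈ s ∧ b ∉ s ∧ a ≠ b ∧ f a = f b := by
    by_cases hx : x ∈ s <;> by_cases hy : y ∈ s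
    · exact absurd (hs hx hy hfxy) hxy
    · exact ⟨x, y, hx, hy, hxy, hfxy⟩
    · exact ⟨y, x, hy, hx, hxy.symm, hfxy.symm⟩
    · exact absurd (hsc hx hy hfxy) hxy
  have hsurj : Surjective fun x : {x // x ≠ b} => f x := by
    intro z
    obtain ⟨x, rfl⟩ := hf z
    by_cases hx : x = b
    · exact ⟨⟨a, hab⟩, show f a = f x by rw [hfab, hx]⟩
    · exact ⟨⟨x, hx⟩, rfl⟩
  refine ⟨⟨⟨b, hb⟩, ⟨a, ha⟩, .ofBijective _ (hsurj.bijective_of_nat_card_le ?_)⟩, ?_⟩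
  · simp [Nat.card_eq_fintype_card, Fintype.card_subtype_compl, hcard]
  · funext x
    by_cases hx : x = b
    · subst hx
      simp [toFun, hfab]
    · simp [toFun, extendNe_of_ne _ _ hx]

end CrossCollision

theorem card_crossCollision [Fintype α] [Fintype β]
    (hcard : Fintype.card α = Fintype.card β + 1) :
    Nat.card (CrossCollision β s) = Nat.card s * Nat.card ↥sᶜ * (Fintype.card β)! := by
  classical
  have hfiber (b : α) : Nat.card ({x // x ≠ b} ≃ β) = (Fintype.card β)! := by
    have hb : Fintype.card {x // x ≠ b} = Fintype.card β := by
      simp [Fintype.card_subtype_compl, hcard]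
    rw [Nat.card_eq_fintype_card, Fintype.card_equiv (Fintype.equivOfCardEq hb), hb]
  rw [Nat.card_sigma]
  simp only [Nat.card_prod, hfiber, Finset.sum_const, Finset.card_univ, smul_eq_mul,
    ← Nat.card_eq_fintype_card]
  ring

end Counting

theorem card_surjective_injOn_injOn_compl {α β : Type*} [Fintype α] [Fintype β]
    (hcard : Fintype.card α = Fintype.card β + 1) (s : Set α) :
    Nat.card {f : α → β // Surjective f ∧ InjOn f s ∧ InjOn f sᶜ} =
      Nat.card s * Nat.card ↥sᶜ * (Fintype.card β)! := by
  classical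
  rw [← card_crossCollision hcard]
  refine (Nat.card_congr (Equiv.ofBijective
    (fun c => ⟨c.toFun, c.surjective_toFun, c.injOn_toFun, c.injOn_compl_toFun⟩) ⟨?_, ?_⟩)).symm
  · exact fun c c' h => CrossCollision.toFun_injective (congrArg Subtype.val h)
  · rintro ⟨f, hf, hs, hsc⟩
    obtain ⟨c, rfl⟩ := CrossCollision.exists_toFun_eq hcard hf hs hsc
    exact ⟨c, rfl⟩

theorem stmt_12_general (n i : ℕ) (hi : 2 ≤ i) (hin : i ≤ n) :
    Nat.card {f : Fin n → Fin (n - 1) //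
      Function.Surjective f ∧
      Set.InjOn f {t : Fin n | (t : ℕ) + 1 ≤ i - 1} ∧
      Set.InjOn f {t : Fin n | i ≤ (t : ℕ) + 1}} =
    (i - 1) * (n - i + 1) * Nat.factorial (n - 1) := by
  set s := {t : Fin n | (t : ℕ) < i - 1}
  have hs_eq : {t : Fin n | (t : ℕ) + 1 ≤ i - 1} = s := by
    ext t; simp only [s, mem_ofPred_eq]; omega
  have hsc_eq : {t : Fin n | i ≤ (t : ℕ) + 1} = sᶜ := by
    ext t; simp only [s, mem_compl_iff, mem_ofPred_eq]; omega
  have hs : Nat.card s = i - 1 := by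
    rw [Nat.card_eq_fintype_card]; exact Fintype.card_fin_lt_of_le (by omega)
  have hsc : Nat.card ↥sᶜ = n - i + 1 := by
    rw [Nat.card_coe_set_eq, ncard_compl, ← Nat.card_coe_set_eq, hs, Nat.card_fin]
    omega
  rw [hs_eq, hsc_eq, card_surjective_injOn_injOn_compl (by simp only [Fintype.card_fin]; omega),
    hs, hsc, Fintype.card_fin]

/-- for `n ≥ 2` and `2 ≤ i ≤ n`, the number of surjections
`f : {1,…,n} → {1,…,n-1}` that are injective on `{1,…,i-1}` and injective on
`{i,…,n}` equals `(i-1)(n-i+1)(n-1)!`. (Positions are 0-indexed via `Fin`, so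
`{1,…,i-1}` is `{t : (t:ℕ)+1 ≤ i-1}` and `{i,…,n}` is `{t : i ≤ (t:ℕ)+1}`.) -/
theorem stmt_12 (n i : ℕ) (hn : 2 ≤ n) (hi : 2 ≤ i) (hin : i ≤ n) :
    Nat.card {f : Fin n → Fin (n - 1) //
      Function.Surjective f ∧
      Set.InjOn f {t : Fin n | (t : ℕ) + 1 ≤ i - 1} ∧
      Set.InjOn f {t : Fin n | i ≤ (t : ℕ) + 1}} =
    (i - 1) * (n - i + 1) * Nat.factorial (n - 1) :=
  stmt_12_general n i hi hin
end

section
/- The Δ-Springer fiber is the union of the sets Z^i: Y_{n,(1^{n−1}),s} = ⋃_{i=1}^n Z^i, where the union is over 2 ≤ i ≤ n when s = n−1 (since Z^1 = ∅ in that case). More precisely: every flag V_• ∈ Y_{n,(1^{n−1}),s} satisfies V_n ⊄ im(x), and V_• belongs to Z^ℓ for ℓ = min{ j : 1 ≤ j ≤ n, V_j ⊄ im(x) }; conversely each Z^i is contained in Y_{n,(1^{n−1}),s}. -/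
/-!
Since `x² = 0`, `x` kills `im x`. For a flag in `Y`, `im x ⊆ V_n` has codimension one, so
`V_n = im x + ℂ u` for any `u ∈ V_n ∖ im x`, and `x V_n = ℂ · x u`. Choosing `ℓ` minimal with
`V_ℓ ⊄ im x` and `u ∈ V_ℓ ∖ im x`, a dimension count gives `V_ℓ ∩ im x = V_{ℓ-1}`, and
`x`-stability of `V_ℓ` puts `x u` there; hence `x V_n ⊆ V_{ℓ-1}`. Conversely, on `Z^i` the map
`x` kills `V_j ⊆ V_{i-1} ⊆ im x` for `j < i`, and sends `V_j ⊆ V_n` into `V_{i-1} ⊆ V_j` for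
`j ≥ i - 1`.
-/

noncomputable section

open Module Submodule
open LinearMap (range mem_range_self)

theorem LinearMap.map_range_eq_bot_of_comp_self_eq_zero {R M : Type*} [Semiring R]
    [AddCommMonoid M] [Module R M] {x : M →ₗ[R] M} (hx : x ∘ₗ x = 0) : (range x).map x = ⊥ := by
  rw [← LinearMap.range_comp, hx, LinearMap.range_zero]

section SquareZero

variable {K E : Type*} [Field K] [AddCommGroup E] [Module K E] [FiniteDimensional K E]

theorem Submodule.eq_of_le_of_lt_of_finrank_eq_add_one {A B C : Submodule K E}
    (hAB : A ≤ B) (hBC : B < C) (hAC : finrank K C = finrank K A + 1) : A = B :=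
  eq_of_le_of_finrank_le hAB (by have := finrank_lt_finrank_of_lt hBC; omega)

theorem Submodule.eq_of_lt_of_le_of_finrank_eq_add_one {A B C : Submodule K E}
    (hAB : A < B) (hBC : B ≤ C) (hAC : finrank K C = finrank K A + 1) : B = C :=
  eq_of_le_of_finrank_le hBC (by have := finrank_lt_finrank_of_lt hAB; omega)

theorem LinearMap.map_le_of_comp_self_eq_zero {x : E →ₗ[K] E} (hx : x ∘ₗ x = 0)
    {U U' N : Submodule K E} (hUU' : U ≤ U') (hU' : finrank K U' = finrank K U + 1)
    (hU : U ≤ range x) (hU'x : ¬ U' ≤ range x) (hxU' : U'.map x ≤ U')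
    (hN : range x ≤ N) (hN' : finrank K N = finrank K (range x) + 1) (hU'N : U' ≤ N) :
    N.map x ≤ U := by
  obtain ⟨u, huU', hux⟩ := SetLike.not_le_iff_exists.mp hU'x
  have hinf : U = U' ⊓ range x :=
    eq_of_le_of_lt_of_finrank_eq_add_one (le_inf hUU' hU) (inf_lt_left.mpr hU'x) hU'
  have hsup : range x ⊔ K ∙ u = N :=
    eq_of_lt_of_le_of_finrank_eq_add_one
      (left_lt_sup.mpr ((span_singleton_le_iff_mem u _).not.mpr hux))
      (sup_le hN ((span_singleton_le_iff_mem u N).mpr (hU'N huU'))) hN'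
  have hxu : x u ∈ U := hinf ▸ ⟨hxU' (mem_map_of_mem huU'), mem_range_self x u⟩
  rw [← hsup, Submodule.map_sup, map_range_eq_bot_of_comp_self_eq_zero hx, bot_sup_eq]
  exact map_le_iff_le_comap.mpr ((span_singleton_le_iff_mem _ _).mpr hxu)

end SquareZero

namespace IsDeltaMap

variable {n s : ℕ} {x : (Fin (n - 1 + s) → ℂ) →ₗ[ℂ] Fin (n - 1 + s) → ℂ}

theorem comp_self_eq_zero (hx : IsDeltaMap n s x) : x ∘ₗ x = 0 := by
  refine (Pi.basisFun ℂ _).ext fun i => ?_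
  rw [Pi.basisFun_apply, LinearMap.comp_apply, LinearMap.zero_apply, hx i]
  split_ifs with h
  · rw [hx, if_neg (by simp only [not_and]; omega)]
  · exact map_zero x

theorem range_eq_span (hs : n - 1 ≤ s) (hx : IsDeltaMap n s x) :
    range x = span ℂ (Set.range fun j : Fin (n - 1) =>
      (Pi.single (Fin.castLE (Nat.le_add_right _ _) j) 1 : Fin (n - 1 + s) → ℂ)) := by
  rw [LinearMap.range_eq_map, ← (Pi.basisFun ℂ _).span_eq, map_span]
  apply le_antisymm <;> rw [span_le]
  · rintro _ ⟨_, ⟨i, rfl⟩, rfl⟩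
    rw [Pi.basisFun_apply, hx i]
    split_ifs with h
    · exact subset_span ⟨⟨i - (n - 1), by omega⟩, rfl⟩
    · exact zero_mem _
  · rintro _ ⟨j, rfl⟩
    have hj : (j : ℕ) + (n - 1) < n - 1 + s := by omega
    refine subset_span ⟨_, ⟨⟨j + (n - 1), hj⟩, rfl⟩, ?_⟩
    rw [Pi.basisFun_apply, hx, if_pos (by simp only; omega)]
    congr 2
    simp

theorem finrank_range (hs : n - 1 ≤ s) (hx : IsDeltaMap n s x) :
    finrank ℂ (range x) = n - 1 := by
  have hli : LinearIndependent ℂ fun j : Fin (n - 1) =>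
      (Pi.single (Fin.castLE (Nat.le_add_right _ _) j) 1 : Fin (n - 1 + s) → ℂ) := by
    simpa [Function.comp_def] using
      (Pi.basisFun ℂ _).linearIndependent.comp _ (Fin.castLE_injective (Nat.le_add_right _ s))
  rw [hx.range_eq_span hs, finrank_span_eq_card hli, Fintype.card_fin]

end IsDeltaMap

section Flags

variable {n s : ℕ} {x : (Fin (n - 1 + s) → ℂ) →ₗ[ℂ] Fin (n - 1 + s) → ℂ}
  {V : ℕ → Submodule ℂ (Fin (n - 1 + s) → ℂ)}

theorem IsFlag.monotoneOn (hV : IsFlag n s V) : MonotoneOn V (Set.Iic n) :=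
  monotoneOn_of_le_succ Set.ordConnected_Iic fun j _ _ hj => by
    rw [Order.succ_eq_add_one] at hj ⊢
    exact hV.2.1 j hj

theorem IsFlag.mono_s15 (hV : IsFlag n s V) {i j : ℕ} (hij : i ≤ j) (hj : j ≤ n) : V i ≤ V j :=
  hV.monotoneOn (show i ≤ n by omega) hj hij

theorem MemZ.memY (hx : x ∘ₗ x = 0) {i : ℕ} (hi : i ≤ n) (hV : MemZ n s i x V) :
    MemY n s x V := by
  obtain ⟨hF, hVi, hxV, hmap⟩ := hV
  refine ⟨hF, hxV, fun j hj => ?_⟩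
  rcases le_total j (i - 1) with hji | hij
  · calc (V j).map x ≤ (range x).map x := map_mono ((hF.mono_s15 hji (by omega)).trans hVi)
      _ = ⊥ := LinearMap.map_range_eq_bot_of_comp_self_eq_zero hx
      _ ≤ V j := bot_le
  · exact (map_mono (hF.mono_s15 hj le_rfl)).trans (hmap.trans (hF.mono_s15 hij hj))

theorem MemY.not_le_range (hn : 1 ≤ n) (hrank : finrank ℂ (range x) = n - 1) (hV : MemY n s x V) :
    ¬ V n ≤ range x := fun h => by
  have := finrank_mono h
  rw [hV.1.2.2 n le_rfl, hrank] at this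
  omega

theorem MemY.exists_memZ (hx : x ∘ₗ x = 0) (hn : 1 ≤ n) (hrank : finrank ℂ (range x) = n - 1)
    (hV : MemY n s x V) :
    ∃ l : ℕ, 1 ≤ l ∧ l ≤ n ∧ ¬ V l ≤ range x ∧
      (∀ j : ℕ, 1 ≤ j → j < l → V j ≤ range x) ∧ MemZ n s l x V := by
  classical
  have hVn := hV.not_le_range hn hrank
  obtain ⟨hF, hxV, hstable⟩ := hV
  have hP : ∃ l, ¬ V l ≤ range x := ⟨n, hVn⟩
  obtain ⟨l, hl, hbelow⟩ : ∃ l, ¬ V l ≤ range x ∧ ∀ j < l, V j ≤ range x :=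
    ⟨_, Nat.find_spec hP, fun j hj => not_not.mp (Nat.find_min hP hj)⟩
  have hl0 : l ≠ 0 := by rintro rfl; exact hl (hF.1 ▸ bot_le)
  have hln : l ≤ n := not_lt.mp fun h => hVn (hbelow n h)
  have hdim := hF.2.2
  refine ⟨l, by omega, hln, hl, fun j _ hj => hbelow j hj,
    hF, hbelow _ (by omega), hxV, ?_⟩
  refine LinearMap.map_le_of_comp_self_eq_zero hx (hF.mono_s15 (by omega) hln) ?_
    (hbelow _ (by omega)) hl (hstable l hln) hxV ?_ (hF.mono_s15 hln le_rfl)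
  · rw [hdim l hln, hdim (l - 1) (by omega)]; omega
  · rw [hdim n le_rfl, hrank]; omega

end Flags

/-- `Y_{n,(1^{n-1}),s} = ⋃_{i=1}^n Z^i`. More precisely: every
`V ∈ Y_{n,(1^{n-1}),s}` satisfies `V_n ⊄ im x` and lies in `Z^ℓ` for
`ℓ = min{ j : 1 ≤ j ≤ n, V_j ⊄ im x }`; conversely each `Z^i` (`1 ≤ i ≤ n`) is
contained in `Y_{n,(1^{n-1}),s}`. -/
theorem stmt_15 (n s : ℕ) (hn : 2 ≤ n) (hs : n - 1 ≤ s)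
    (x : (Fin (n - 1 + s) → ℂ) →ₗ[ℂ] (Fin (n - 1 + s) → ℂ)) (hx : IsDeltaMap n s x) :
    ({V : ℕ → Submodule ℂ (Fin (n - 1 + s) → ℂ) | MemY n s x V}
        = ⋃ i ∈ Set.Icc 1 n, {V | MemZ n s i x V}) ∧
    (∀ V : ℕ → Submodule ℂ (Fin (n - 1 + s) → ℂ), MemY n s x V →
      ¬ V n ≤ LinearMap.range x ∧
      ∃ l : ℕ, 1 ≤ l ∧ l ≤ n ∧ ¬ V l ≤ LinearMap.range x ∧
        (∀ j : ℕ, 1 ≤ j → j < l → V j ≤ LinearMap.range x) ∧ MemZ n s l x V) ∧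
    (∀ i : ℕ, 1 ≤ i → i ≤ n →
      ∀ V : ℕ → Submodule ℂ (Fin (n - 1 + s) → ℂ), MemZ n s i x V → MemY n s x V) := by
  have hx2 := hx.comp_self_eq_zero
  have hrank := hx.finrank_range hs
  refine ⟨Set.ext fun V => ⟨fun hV => ?_, fun hV => ?_⟩,
    fun V hV => ⟨hV.not_le_range (by omega) hrank, hV.exists_memZ hx2 (by omega) hrank⟩,
    fun i _ hi V hV => hV.memY hx2 hi⟩
  · obtain ⟨l, hl1, hln, -, -, hZ⟩ := hV.exists_memZ hx2 (by omega) hrank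
    exact Set.mem_biUnion ⟨hl1, hln⟩ hZ
  · obtain ⟨i, ⟨-, hi⟩, hZ⟩ := Set.mem_iUnion₂.mp hV
    exact hZ.memY hx2 hi
end
end
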